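/- arXiv:2103.11888 — 2 statements merged into one kernel-verified Lean document; each statement's English description precedes it below -/
import Mathlib

section
/- If f: ℝⁿ → ℝ is convex, differentiable, and β-smooth, and x* is a global minimizer of f, then gradient descent iterates x_{t+1} = x_t - μ∇f(x_t) with μ ≤ 1/β satisfy f(x_t) - f(x*) ≤ ‖x_0 - x*‖²/(2μt). -/
open Set RealInnerProductSpace
open scoped Gradient NNReal

/-!
Smoothness gives the descent lemma, so a gradient step with `μ * β ≤ 1` lowers `f` by at least
`μ / 2 * ‖∇f x‖²`. Combined with the convexity bound `f x - f z ≤ ⟪∇f x, x - z⟫` this yields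
`2μ (f x_{t+1} - f z) ≤ ‖x_t - z‖² - ‖x_{t+1} - z‖²`, which telescopes; as `f x_t` is
nonincreasing, `t (f x_t - f z)` is at most the telescoped sum.
-/

section

variable {E : Type*} [NormedAddCommGroup E] [InnerProductSpace ℝ E] [CompleteSpace E] {f : E → ℝ}

theorem DifferentiableAt.hasDerivAt_comp_add_smul {x v : E} {t : ℝ}
    (hf : DifferentiableAt ℝ f (x + t • v)) :
    HasDerivAt (fun s : ℝ => f (x + s • v)) ⟪∇ f (x + t • v), v⟫ t := by
  have hline : HasDerivAt (fun s : ℝ => x + s • v) v t := by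
    simpa using ((hasDerivAt_id t).smul_const v).const_add x
  exact hf.hasGradientAt.hasFDerivAt.comp_hasDerivAt t hline

theorem ConvexOn.add_inner_gradient_le (hconv : ConvexOn ℝ univ f) {x : E}
    (hf : DifferentiableAt ℝ f x) (y : E) : f x + ⟪∇ f x, y - x⟫ ≤ f y := by
  have hline : ConvexOn ℝ univ (fun s : ℝ => f (x + s • (y - x))) := by
    have hcomp : (fun s : ℝ => f (x + s • (y - x))) = f ∘ AffineMap.lineMap x y := by
      funext s
      simp [AffineMap.lineMap_apply_module', add_comm]
    simpa only [hcomp, preimage_univ] using hconv.comp_affineMap (AffineMap.lineMap x y)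
  have hf0 : DifferentiableAt ℝ f (x + (0 : ℝ) • (y - x)) := by simpa using hf
  have hderiv : HasDerivAt (fun s : ℝ => f (x + s • (y - x))) ⟪∇ f x, y - x⟫ 0 := by
    simpa using hf0.hasDerivAt_comp_add_smul
  have hslope := hline.le_slope_of_hasDerivAt (mem_univ 0) (mem_univ 1) one_pos hderiv
  simp only [slope, sub_zero, inv_one, one_smul, zero_smul, add_zero, add_sub_cancel,
    vsub_eq_sub, smul_eq_mul, one_mul] at hslope
  linarith

theorem LipschitzWith.apply_le_add_inner_gradient_add_sq_norm {K : ℝ≥0}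
    (hlip : LipschitzWith K (∇ f)) (hf : Differentiable ℝ f) (x y : E) :
    f y ≤ f x + ⟪∇ f x, y - x⟫ + K / 2 * ‖y - x‖ ^ 2 := by
  set v := y - x
  have hgrad (s : ℝ) (hs : 0 ≤ s) : ⟪∇ f (x + s • v), v⟫ - ⟪∇ f x, v⟫ ≤ K * s * ‖v‖ ^ 2 :=
    calc ⟪∇ f (x + s • v), v⟫ - ⟪∇ f x, v⟫ = ⟪∇ f (x + s • v) - ∇ f x, v⟫ :=
          (inner_sub_left _ _ _).symm
      _ ≤ ‖∇ f (x + s • v) - ∇ f x‖ * ‖v‖ := real_inner_le_norm _ _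
      _ ≤ K * ‖(x + s • v) - x‖ * ‖v‖ := by gcongr; exact hlip.norm_sub_le _ _
      _ = K * s * ‖v‖ ^ 2 := by
          rw [add_sub_cancel_left, norm_smul, Real.norm_of_nonneg hs]; ring
  have hderiv (s : ℝ) :
      HasDerivAt (fun s : ℝ => K * s ^ 2 / 2 * ‖v‖ ^ 2 + s * ⟪∇ f x, v⟫ - f (x + s • v))
      (K * s * ‖v‖ ^ 2 + ⟪∇ f x, v⟫ - ⟪∇ f (x + s • v), v⟫) s := by
    have hsq := ((hasDerivAt_pow 2 s).const_mul (K : ℝ)).div_const 2 |>.mul_const (‖v‖ ^ 2)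
    have hlin := (hasDerivAt_id s).mul_const ⟪∇ f x, v⟫
    exact ((hsq.add hlin).sub (hf _).hasDerivAt_comp_add_smul).congr_deriv (by push_cast; ring)
  have hmono := monotoneOn_of_hasDerivWithinAt_nonneg (convex_Ici 0)
    (fun s _ => (hderiv s).continuousAt.continuousWithinAt)
    (fun s _ => (hderiv s).hasDerivWithinAt)
    (fun s hs => by
      rw [interior_Ici] at hs
      linarith [hgrad s hs.le])
    self_mem_Ici (zero_le_one' ℝ : (1 : ℝ) ∈ Ici 0) zero_le_one
  simp only [one_pow, one_smul, one_mul, mul_one, zero_pow two_ne_zero, zero_smul, zero_mul,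
    mul_zero, zero_div, add_zero, v, add_sub_cancel] at hmono
  linarith

noncomputable def gradientStep (f : E → ℝ) (μ : ℝ) (x : E) : E := x - μ • ∇ f x

variable {K : ℝ≥0} {μ : ℝ}

theorem apply_gradientStep_le (hlip : LipschitzWith K (∇ f)) (hf : Differentiable ℝ f)
    (hμ : 0 ≤ μ) (hμK : μ * K ≤ 1) (x : E) :
    f (gradientStep f μ x) ≤ f x - μ / 2 * ‖∇ f x‖ ^ 2 := by
  have h := hlip.apply_le_add_inner_gradient_add_sq_norm hf x (x - μ • ∇ f x)
  rw [sub_sub_cancel_left, inner_neg_right, norm_neg, inner_smul_right,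
    real_inner_self_eq_norm_sq, norm_smul, Real.norm_of_nonneg hμ, mul_pow] at h
  rw [gradientStep]
  nlinarith [mul_nonneg (mul_nonneg hμ (sq_nonneg ‖∇ f x‖)) (sub_nonneg.2 hμK)]

theorem ConvexOn.two_mul_apply_gradientStep_sub_le (hconv : ConvexOn ℝ univ f)
    (hlip : LipschitzWith K (∇ f)) (hf : Differentiable ℝ f) (hμ : 0 ≤ μ) (hμK : μ * K ≤ 1)
    (x z : E) :
    2 * μ * (f (gradientStep f μ x) - f z) ≤ ‖x - z‖ ^ 2 - ‖gradientStep f μ x - z‖ ^ 2 := by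
  have hdecrease := apply_gradientStep_le hlip hf hμ hμK x
  have hsupport := hconv.add_inner_gradient_le (hf x) z
  have hexpand : ‖gradientStep f μ x - z‖ ^ 2
      = ‖x - z‖ ^ 2 - 2 * μ * ⟪∇ f x, x - z⟫ + μ ^ 2 * ‖∇ f x‖ ^ 2 := by
    rw [gradientStep, sub_right_comm, norm_sub_sq_real, inner_smul_right, norm_smul,
      Real.norm_of_nonneg hμ, real_inner_comm]
    ring
  rw [← neg_sub x z, inner_neg_right] at hsupport
  calc 2 * μ * (f (gradientStep f μ x) - f z)
      ≤ 2 * μ * (f x - μ / 2 * ‖∇ f x‖ ^ 2 - f z) := by gcongr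
    _ = 2 * μ * (f x - f z) - μ ^ 2 * ‖∇ f x‖ ^ 2 := by ring
    _ ≤ 2 * μ * ⟪∇ f x, x - z⟫ - μ ^ 2 * ‖∇ f x‖ ^ 2 := by gcongr; linarith
    _ = ‖x - z‖ ^ 2 - ‖gradientStep f μ x - z‖ ^ 2 := by rw [hexpand]; ring

end

theorem Antitone.natCast_mul_le_sub {a d : ℕ → ℝ} (ha : Antitone a)
    (had : ∀ t, a (t + 1) ≤ d t - d (t + 1)) (t : ℕ) : t * a t ≤ d 0 - d t := by
  induction t with
  | zero => simp
  | succ t ih =>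
    have hmono : (t : ℝ) * a (t + 1) ≤ t * a t := by gcongr; exact ha t.le_succ
    push_cast
    linarith [had t]

theorem stmt_1_general {n : ℕ} (f : EuclideanSpace ℝ (Fin n) → ℝ) (β μ : ℝ)
    (hβ : 0 < β) (hμ : 0 < μ) (hμβ : μ ≤ 1 / β)
    (hconv : ConvexOn ℝ Set.univ f)
    (hdiff : Differentiable ℝ f)
    (hlip : LipschitzWith (Real.toNNReal β) (fun x => gradient f x))
    (xstar : EuclideanSpace ℝ (Fin n))
    (x : ℕ → EuclideanSpace ℝ (Fin n))
    (hx : ∀ t, x (t + 1) = x t - μ • gradient f (x t)) :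
    ∀ t : ℕ, 0 < t → f (x t) - f xstar ≤ ‖x 0 - xstar‖ ^ 2 / (2 * μ * t) := by
  have hμK : μ * Real.toNNReal β ≤ 1 := by
    rw [Real.coe_toNNReal _ hβ.le]
    exact (le_div_iff₀ hβ).1 hμβ
  have hstep (t : ℕ) : x (t + 1) = gradientStep f μ (x t) := hx t
  have hanti : Antitone fun t => 2 * μ * (f (x t) - f xstar) :=
    antitone_nat_of_succ_le fun t => by
      rw [hstep]
      gcongr
      linarith [apply_gradientStep_le hlip hdiff hμ.le hμK (x t),
        (by positivity : 0 ≤ μ / 2 * ‖∇ f (x t)‖ ^ 2)]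
  have hbound := hanti.natCast_mul_le_sub fun t => hstep t ▸
    hconv.two_mul_apply_gradientStep_sub_le hlip hdiff hμ.le hμK (x t) xstar
  intro t ht
  rw [le_div_iff₀ (by positivity)]
  linarith [hbound t, sq_nonneg ‖x t - xstar‖]

theorem stmt_1 {n : ℕ} (f : EuclideanSpace ℝ (Fin n) → ℝ) (β μ : ℝ)
    (hβ : 0 < β) (hμ : 0 < μ) (hμβ : μ ≤ 1 / β)
    (hconv : ConvexOn ℝ Set.univ f)
    (hdiff : Differentiable ℝ f)
    (hlip : LipschitzWith (Real.toNNReal β) (fun x => gradient f x))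
    (xstar : EuclideanSpace ℝ (Fin n)) (hmin : ∀ y, f xstar ≤ f y)
    (x : ℕ → EuclideanSpace ℝ (Fin n))
    (hx : ∀ t, x (t + 1) = x t - μ • gradient f (x t)) :
    ∀ t : ℕ, 0 < t → f (x t) - f xstar ≤ ‖x 0 - xstar‖ ^ 2 / (2 * μ * t) :=
  stmt_1_general f β μ hβ hμ hμβ hconv hdiff hlip xstar x hx
end

section
/- If Q: ℝᵃ × ℝᵇ → ℝ is bounded below, differentiable, and β-smooth, then along block coordinate gradient descent with step size μ < 1/β, the block gradients vanish in the limit: ‖∇_θQ(θ_t, ω_t)‖ → 0 and ‖∇_ωQ(θ_{t+1}, ω_t)‖ → 0 as t → ∞. -/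
open Filter Topology RealInnerProductSpace

/-! A half-step in one block moves `Q` along a direction `(-μ g, 0)` (or `(0, -μ g)`), where `g`
is the block gradient, so `Q'(p)` applied to it is `-μ ‖g‖²`. By the mean value inequality a
function with `β`-Lipschitz derivative satisfies `f (x + d) ≤ f x + f' x d + β ‖d‖²`, hence each
half-step lowers `Q` by at least `(μ - β μ²) ‖g‖²`, a positive multiple of `‖g‖²` since
`μ < 1 / β`. The values `Q (θ t, ω t)` therefore decrease and, being bounded below, converge, so
the decrements, and with them both block gradients, tend to zero. -/

theorem image_add_le_of_lipschitzWith_fderiv {E : Type*} [NormedAddCommGroup E] [NormedSpace ℝ E]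
    {f : E → ℝ} {K : NNReal} (hf : Differentiable ℝ f) (hf' : LipschitzWith K (fderiv ℝ f))
    (x d : E) : f (x + d) ≤ f x + fderiv ℝ f x d + K * ‖d‖ ^ 2 := by
  have hmvt : ‖f (x + d) - f x - fderiv ℝ f x (x + d - x)‖ ≤ K * ‖d‖ * ‖x + d - x‖ := by
    refine (convex_segment x (x + d)).norm_image_sub_le_of_norm_fderiv_le' (fun y _ => hf y)
      (fun y hy => ?_) (left_mem_segment ℝ x (x + d)) (right_mem_segment ℝ x (x + d))
    calc ‖fderiv ℝ f y - fderiv ℝ f x‖ ≤ K * ‖y - x‖ := hf'.norm_sub_le y x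
      _ ≤ K * ‖x + d - x‖ := by gcongr; exact norm_sub_le_of_mem_segment hy
      _ = K * ‖d‖ := by rw [add_sub_cancel_left]
  rw [add_sub_cancel_left] at hmvt
  linarith [le_abs_self (f (x + d) - f x - fderiv ℝ f x d), Real.norm_eq_abs _ ▸ hmvt]

theorem image_sub_smul_le_of_lipschitzWith_fderiv {G H : Type*}
    [NormedAddCommGroup G] [NormedSpace ℝ G] [NormedAddCommGroup H] [InnerProductSpace ℝ H]
    {f : G → ℝ} {K : NNReal} (hf : Differentiable ℝ f) (hf' : LipschitzWith K (fderiv ℝ f))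
    (ι : H →ₗᵢ[ℝ] G) (x : G) {g : H} (hg : ∀ v, ⟪g, v⟫ = fderiv ℝ f x (ι v)) (μ : ℝ) :
    f (x - ι (μ • g)) ≤ f x - (μ - K * μ ^ 2) * ‖g‖ ^ 2 := by
  have h := image_add_le_of_lipschitzWith_fderiv hf hf' x (-ι (μ • g))
  rw [← sub_eq_add_neg, map_neg, ← hg, inner_smul_right, real_inner_self_eq_norm_sq, norm_neg,
    ι.norm_map, norm_smul, mul_pow, Real.norm_eq_abs, sq_abs] at h
  linarith

theorem inner_gradient_prodMk_left {E F : Type*} [NormedAddCommGroup E] [InnerProductSpace ℝ E]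
    [CompleteSpace E] [NormedAddCommGroup F] [NormedSpace ℝ F] {f : E × F → ℝ} {x : E} {y : F}
    (hf : DifferentiableAt ℝ f (x, y)) (v : E) :
    ⟪gradient (fun x' => f (x', y)) x, v⟫ = fderiv ℝ f (x, y) (v, 0) := by
  have hpartial : HasFDerivAt (fun x' => f (x', y))
      ((fderiv ℝ f (x, y)).comp (.inl ℝ E F)) x :=
    hf.hasFDerivAt.comp x (hasFDerivAt_prodMk_left x y)
  rw [inner_gradient_left, hpartial.fderiv]
  rfl

theorem inner_gradient_prodMk_right {E F : Type*} [NormedAddCommGroup E] [NormedSpace ℝ E]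
    [NormedAddCommGroup F] [InnerProductSpace ℝ F] [CompleteSpace F] {f : E × F → ℝ} {x : E} {y : F}
    (hf : DifferentiableAt ℝ f (x, y)) (v : F) :
    ⟪gradient (fun y' => f (x, y')) y, v⟫ = fderiv ℝ f (x, y) (0, v) := by
  have hpartial : HasFDerivAt (fun y' => f (x, y'))
      ((fderiv ℝ f (x, y)).comp (.inr ℝ E F)) y :=
    hf.hasFDerivAt.comp y (hasFDerivAt_prodMk_right x y)
  rw [inner_gradient_left, hpartial.fderiv]
  rfl

theorem image_sub_gradient_fst_le {E F : Type*} [NormedAddCommGroup E] [InnerProductSpace ℝ E]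
    [CompleteSpace E] [NormedAddCommGroup F] [NormedSpace ℝ F] {f : E × F → ℝ} {K : NNReal}
    (hf : Differentiable ℝ f) (hf' : LipschitzWith K (fderiv ℝ f))
    (x : E) (y : F) (μ : ℝ) :
    f (x - μ • gradient (fun x' => f (x', y)) x, y)
      ≤ f (x, y) - (μ - K * μ ^ 2) * ‖gradient (fun x' => f (x', y)) x‖ ^ 2 := by
  simpa using image_sub_smul_le_of_lipschitzWith_fderiv hf hf' (.inl ℝ E F) (x, y)
    (inner_gradient_prodMk_left (hf _)) μ

theorem image_sub_gradient_snd_le {E F : Type*} [NormedAddCommGroup E] [NormedSpace ℝ E]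
    [NormedAddCommGroup F] [InnerProductSpace ℝ F] [CompleteSpace F] {f : E × F → ℝ} {K : NNReal}
    (hf : Differentiable ℝ f) (hf' : LipschitzWith K (fderiv ℝ f))
    (x : E) (y : F) (μ : ℝ) :
    f (x, y - μ • gradient (fun y' => f (x, y')) y)
      ≤ f (x, y) - (μ - K * μ ^ 2) * ‖gradient (fun y' => f (x, y')) y‖ ^ 2 := by
  simpa using image_sub_smul_le_of_lipschitzWith_fderiv hf hf' (.inr ℝ E F) (x, y)
    (inner_gradient_prodMk_right (hf _)) μ

theorem tendsto_norm_zero_of_sufficient_decrease {E : Type*} [SeminormedAddCommGroup E]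
    {V : ℕ → ℝ} {g : ℕ → E} {ε : ℝ} (hε : 0 < ε) (hV : BddBelow (Set.range V))
    (hdec : ∀ t, V (t + 1) + ε * ‖g t‖ ^ 2 ≤ V t) : Tendsto (fun t => ‖g t‖) atTop (𝓝 0) := by
  have hanti : Antitone V := antitone_nat_of_succ_le fun t => by nlinarith [hdec t]
  have hlim := tendsto_atTop_ciInf hanti hV
  have hgap : Tendsto (fun t => (V t - V (t + 1)) / ε) atTop (𝓝 0) := by
    simpa using (hlim.sub (hlim.comp (tendsto_add_atTop_nat 1))).div_const ε
  have hsq : Tendsto (fun t => ‖g t‖ ^ 2) atTop (𝓝 0) :=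
    squeeze_zero (fun t => sq_nonneg _)
      (fun t => (le_div_iff₀ hε).2 (by linarith [hdec t])) hgap
  simpa [Real.sqrt_sq (norm_nonneg _)] using hsq.sqrt

theorem stmt_13 {a b : ℕ}
    (Q : EuclideanSpace ℝ (Fin a) × EuclideanSpace ℝ (Fin b) → ℝ)
    (β μ : ℝ) (hβ : 0 < β) (hμ : 0 < μ) (hμβ : μ < 1 / β)
    (c : ℝ) (hbdd : ∀ p, c ≤ Q p)
    (hdiff : Differentiable ℝ Q)
    (hlip : LipschitzWith (Real.toNNReal β) (fun p => fderiv ℝ Q p))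
    (gθ : EuclideanSpace ℝ (Fin a) → EuclideanSpace ℝ (Fin b) → EuclideanSpace ℝ (Fin a))
    (gω : EuclideanSpace ℝ (Fin a) → EuclideanSpace ℝ (Fin b) → EuclideanSpace ℝ (Fin b))
    (hgθ : ∀ θ ω, gθ θ ω = gradient (fun θ' => Q (θ', ω)) θ)
    (hgω : ∀ θ ω, gω θ ω = gradient (fun ω' => Q (θ, ω')) ω)
    (θ : ℕ → EuclideanSpace ℝ (Fin a)) (ω : ℕ → EuclideanSpace ℝ (Fin b))
    (hθ : ∀ t, θ (t + 1) = θ t - μ • gθ (θ t) (ω t))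
    (hω : ∀ t, ω (t + 1) = ω t - μ • gω (θ (t + 1)) (ω t)) :
    Tendsto (fun t => ‖gθ (θ t) (ω t)‖) atTop (𝓝 0) ∧
      Tendsto (fun t => ‖gω (θ (t + 1)) (ω t)‖) atTop (𝓝 0) := by
  set ε := μ - β * μ ^ 2
  have hε : 0 < ε := by
    have : μ * β < 1 := (lt_div_iff₀ hβ).mp hμβ
    nlinarith
  have hK : (β.toNNReal : ℝ) = β := Real.coe_toNNReal β hβ.le
  have hstepθ t : Q (θ (t + 1), ω t) ≤ Q (θ t, ω t) - ε * ‖gθ (θ t) (ω t)‖ ^ 2 := by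
    simpa only [hθ, hgθ, hK] using image_sub_gradient_fst_le hdiff hlip (θ t) (ω t) μ
  have hstepω t :
      Q (θ (t + 1), ω (t + 1)) ≤ Q (θ (t + 1), ω t) - ε * ‖gω (θ (t + 1)) (ω t)‖ ^ 2 := by
    simpa only [hω, hgω, hK] using image_sub_gradient_snd_le hdiff hlip (θ (t + 1)) (ω t) μ
  have hV : BddBelow (Set.range fun t => Q (θ t, ω t)) := ⟨c, by rintro _ ⟨t, rfl⟩; exact hbdd _⟩
  have hnonneg (x : ℝ) : 0 ≤ ε * x ^ 2 := by positivity
  exact ⟨tendsto_norm_zero_of_sufficient_decrease hε hV fun t => by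
      linarith [hstepθ t, hstepω t, hnonneg ‖gω (θ (t + 1)) (ω t)‖],
    tendsto_norm_zero_of_sufficient_decrease hε hV fun t => by
      linarith [hstepθ t, hstepω t, hnonneg ‖gθ (θ t) (ω t)‖]⟩
end
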